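/- arXiv:1905.12264 — 6 statements merged into one kernel-verified Lean document; each statement's English description precedes it below -/
import Mathlib

section
/- If a mechanism M is (ε,δ)-differentially private and K is a γ-Dobrushin Markov operator, then the post-processed mechanism K∘M is (ε, γδ)-differentially private. -/
open MeasureTheory Set
open scoped ENNReal

lemma layer_step {X : Type*} [MeasurableSpace X] (μ ν : Measure X) (c : ℝ≥0∞)
    (γ : ℝ) (hγ0 : 0 ≤ γ) (g : X → ℝ≥0∞) (hg : Measurable g)
    (hgb : ∀ x, g x ≤ ENNReal.ofReal γ) :
    (∫⁻ x, g x ∂μ) - c * ∫⁻ x, g x ∂ν ≤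
      ENNReal.ofReal γ * ⨆ (E : Set X) (_ : MeasurableSet E), μ E - c * ν E := by
  set D := ⨆ (E : Set X) (_ : MeasurableSet E), μ E - c * ν E with hD
  set r : X → ℝ := fun x => (g x).toReal with hr
  have hgne : ∀ x, g x ≠ ∞ := fun x => ((hgb x).trans_lt ENNReal.ofReal_lt_top).ne
  have hor : ∀ x, ENNReal.ofReal (r x) = g x := fun x => ENNReal.ofReal_toReal (hgne x)
  have hrm : Measurable r := hg.ennreal_toReal
  have hrb : ∀ x, r x ≤ γ := fun x => ENNReal.toReal_le_of_le_ofReal hγ0 (hgb x)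
  have hlcμ : ∫⁻ x, g x ∂μ = ∫⁻ t in Ioi (0:ℝ), μ {a | t < r a} := by
    rw [← lintegral_congr fun x => hor x]
    exact lintegral_eq_lintegral_meas_lt μ
      (Filter.Eventually.of_forall fun x => ENNReal.toReal_nonneg) hrm.aemeasurable
  have hlcν : ∫⁻ x, g x ∂ν = ∫⁻ t in Ioi (0:ℝ), ν {a | t < r a} := by
    rw [← lintegral_congr fun x => hor x]
    exact lintegral_eq_lintegral_meas_lt ν
      (Filter.Eventually.of_forall fun x => ENNReal.toReal_nonneg) hrm.aemeasurable
  have hanti : Measurable fun t : ℝ => ν {a | t < r a} := by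
    apply Antitone.measurable
    intro s t hst
    exact measure_mono fun a ha => lt_of_le_of_lt hst ha
  rw [hlcμ, hlcν, ← lintegral_const_mul c hanti]
  refine le_trans (lintegral_sub_le _ _ (hanti.const_mul c)) ?_
  have hbound : ∀ t ∈ Ioi (0:ℝ),
      μ {a | t < r a} - c * ν {a | t < r a} ≤ (Ioc (0:ℝ) γ).indicator (fun _ => D) t := by
    intro t ht
    by_cases htγ : t ≤ γ
    · rw [indicator_of_mem (show t ∈ Ioc (0:ℝ) γ from ⟨ht, htγ⟩)]
      have hS : MeasurableSet {a | t < r a} := measurableSet_lt measurable_const hrm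
      exact le_iSup₂ (f := fun (E : Set X) (_ : MeasurableSet E) => μ E - c * ν E) _ hS
    · rw [indicator_of_notMem (fun h => htγ h.2)]
      have hempty : {a | t < r a} = ∅ := by
        ext a; simp only [mem_setOf_eq, mem_empty_iff_false, iff_false, not_lt]
        exact (hrb a).trans (le_of_not_ge htγ)
      rw [hempty, measure_empty, zero_tsub]
  refine le_trans (setLIntegral_mono' measurableSet_Ioi hbound) ?_
  rw [lintegral_indicator measurableSet_Ioc, Measure.restrict_restrict measurableSet_Ioc,
    setLIntegral_const]
  have : Ioc (0:ℝ) γ ∩ Ioi 0 = Ioc 0 γ := inter_eq_left.2 fun x hx => hx.1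
  rw [this, Real.volume_Ioc, sub_zero, mul_comm]

/-- Hockey-stick divergence `D_{e^ε}` between measures. -/
noncomputable def hsDiv {Y : Type*} [MeasurableSpace Y] (ε : ℝ) (μ ν : Measure Y) : ℝ≥0∞ :=
  ⨆ (E : Set Y) (_ : MeasurableSet E), μ E - ENNReal.ofReal (Real.exp ε) * ν E

/-- Total variation distance between probability measures. -/
noncomputable def tvDist {Y : Type*} [MeasurableSpace Y] (μ ν : Measure Y) : ℝ≥0∞ :=
  ⨆ (E : Set Y) (_ : MeasurableSet E), μ E - ν E

/-- if `M` is `(ε,δ)`-DP and `K` is a γ-Dobrushin Markov operator,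
then `K ∘ M` is `(ε, γδ)`-DP. -/
theorem dobrushin_postprocessing_amplification
    {D X Y : Type*} [MeasurableSpace X] [MeasurableSpace Y]
    (Adj : D → D → Prop)
    (M : D → Measure X) (hMP : ∀ d, IsProbabilityMeasure (M d))
    (K : X → Measure Y) (hKm : Measurable K) (hKP : ∀ x, IsProbabilityMeasure (K x))
    (ε δ γ : ℝ) (hε : 0 ≤ ε) (hδ : 0 ≤ δ) (hγ0 : 0 ≤ γ) (hγ1 : γ ≤ 1)
    (hDP : ∀ d d', Adj d d' → hsDiv ε (M d) (M d') ≤ ENNReal.ofReal δ)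
    (hDobrushin : ∀ x x', tvDist (K x) (K x') ≤ ENNReal.ofReal γ) :
    ∀ d d', Adj d d' →
      hsDiv ε ((M d).bind K) ((M d').bind K) ≤ ENNReal.ofReal (γ * δ) := by
  intro d d' hdd'
  haveI := hMP d; haveI := hMP d'
  have hX : Nonempty X := by
    by_contra h
    rw [not_nonempty_iff] at h
    have h1 := (hMP d).measure_univ
    rw [Set.univ_eq_empty_iff.2 h, measure_empty] at h1
    exact zero_ne_one h1
  set c : ℝ≥0∞ := ENNReal.ofReal (Real.exp ε) with hc
  have hc1 : (1 : ℝ≥0∞) ≤ c := by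
    rw [hc, ← ENNReal.ofReal_one]
    exact ENNReal.ofReal_le_ofReal (Real.one_le_exp hε)
  rw [hsDiv]
  refine iSup₂_le fun E hE => ?_
  rw [Measure.bind_apply hE hKm.aemeasurable, Measure.bind_apply hE hKm.aemeasurable]
  set f : X → ℝ≥0∞ := fun x => K x E with hfdef
  have hf : Measurable f := (Measure.measurable_coe hE).comp hKm
  have hf1 : ∀ x, f x ≤ 1 := fun x => by
    haveI := hKP x; exact prob_le_one
  set a : ℝ≥0∞ := ⨅ x, f x with ha
  have haf : ∀ x, a ≤ f x := fun x => iInf_le _ x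
  have ha1 : a ≤ 1 := (haf hX.some).trans (hf1 _)
  have hane : a ≠ ∞ := (ha1.trans_lt ENNReal.one_lt_top).ne
  set g : X → ℝ≥0∞ := fun x => f x - a with hgdef
  have hg : Measurable g := hf.sub measurable_const
  have hgb : ∀ x, g x ≤ ENNReal.ofReal γ := by
    intro x
    have : g x = ⨆ x', f x - f x' := by rw [hgdef]; exact ENNReal.sub_iInf
    rw [this]
    refine iSup_le fun x' => ?_
    refine le_trans ?_ (hDobrushin x x')
    exact le_iSup₂ (f := fun (E : Set Y) (_ : MeasurableSet E) => K x E - K x' E) E hE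
  have hfg : ∀ x, f x = a + g x := fun x => (add_tsub_cancel_of_le (haf x)).symm
  have hint : ∀ ξ : Measure X, IsProbabilityMeasure ξ →
      ∫⁻ x, f x ∂ξ = a + ∫⁻ x, g x ∂ξ := by
    intro ξ hξ
    rw [lintegral_congr hfg, lintegral_add_left measurable_const, lintegral_const,
      hξ.measure_univ, mul_one]
  rw [hint (M d) (hMP d), hint (M d') (hMP d')]
  set A := ∫⁻ x, g x ∂(M d)
  set B := ∫⁻ x, g x ∂(M d')
  have step1 : (a + A) - c * (a + B) ≤ A - c * B := by
    have h1 : a + c * B ≤ c * (a + B) := by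
      rw [mul_add]
      gcongr
      exact le_mul_of_one_le_left (zero_le (a := a)) hc1
    refine le_trans (tsub_le_tsub_left h1 _) ?_
    rw [tsub_le_iff_right, add_comm (A - c * B)]
    calc a + A ≤ a + (c * B + (A - c * B)) := by gcongr; exact le_add_tsub
      _ = a + c * B + (A - c * B) := (add_assoc _ _ _).symm
  refine le_trans step1 ?_
  refine le_trans (layer_step (M d) (M d') c γ hγ0 g hg hgb) ?_
  rw [ENNReal.ofReal_mul hγ0]
  gcongr
  exact hDP d d' hdd'
end

section
/- If M is an (ε,δ)-DP mechanism and K is a (γ, ε')-Dobrushin Markov operator with ε' = log(1 + (e^ε - 1)/δ), then K∘M is (ε, γδ)-DP. -/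
open MeasureTheory
open scoped ENNReal
open Set

/-- auxiliary lemmas -/
lemma hsDiv_le_iff {Y : Type*} [MeasurableSpace Y] {ε : ℝ} {μ ν : Measure Y} {E : Set Y}
    (hE : MeasurableSet E) {c : ℝ≥0∞} (h : hsDiv ε μ ν ≤ c) :
    μ E ≤ c + ENNReal.ofReal (Real.exp ε) * ν E := by
  rw [← tsub_le_iff_right]
  exact le_trans (le_iSup₂ (f := fun E (_ : MeasurableSet E) =>
    μ E - ENNReal.ofReal (Real.exp ε) * ν E) E hE) h

/-- Layer-cake comparison: if `0 ≤ g ≤ c` then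
`∫ g dμ ≤ c * hsDiv ε μ ν + e^ε ∫ g dν`. -/
lemma lintegral_le_of_hsDiv {X : Type*} [MeasurableSpace X] (μ ν : Measure X)
    (g : X → ℝ≥0∞) (hg : Measurable g) (c : ℝ≥0∞) (hc : c ≠ ∞) (hgc : ∀ x, g x ≤ c) (ε : ℝ) :
    ∫⁻ x, g x ∂μ ≤ c * hsDiv ε μ ν + ENNReal.ofReal (Real.exp ε) * ∫⁻ x, g x ∂ν := by
  set R : ℝ := c.toReal with hR
  set G : X → ℝ := fun x => (g x).toReal with hG
  have hGm : Measurable G := hg.ennreal_toReal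
  have hGnn : ∀ x, 0 ≤ G x := fun x => ENNReal.toReal_nonneg
  have hofReal : ∀ x, ENNReal.ofReal (G x) = g x := fun x =>
    ENNReal.ofReal_toReal (lt_of_le_of_lt (hgc x) (lt_top_iff_ne_top.2 hc)).ne
  have hGR : ∀ x, G x ≤ R := fun x => ENNReal.toReal_mono hc (hgc x)
  have hlcμ : ∫⁻ x, g x ∂μ = ∫⁻ t in Ioi 0, μ {x | t < G x} := by
    rw [← lintegral_eq_lintegral_meas_lt μ (Filter.Eventually.of_forall hGnn) hGm.aemeasurable]
    simp_rw [hofReal]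
  have hlcν : ∫⁻ x, g x ∂ν = ∫⁻ t in Ioi 0, ν {x | t < G x} := by
    rw [← lintegral_eq_lintegral_meas_lt ν (Filter.Eventually.of_forall hGnn) hGm.aemeasurable]
    simp_rw [hofReal]
  -- restrict the μ-side integral to Ioc 0 R
  have hμres : ∫⁻ t in Ioi 0, μ {x | t < G x} ≤ ∫⁻ t in Ioc 0 R, μ {x | t < G x} := by
    have hzero : ∀ t ∈ Ioi 0, μ {x | t < G x} = (Ioc 0 R).indicator (fun t => μ {x | t < G x}) t := by
      intro t ht
      by_cases htR : t ≤ R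
      · rw [indicator_of_mem (mem_Ioc.mpr ⟨ht, htR⟩)]
      · rw [indicator_of_notMem (fun h => htR h.2)]
        have : {x | t < G x} = ∅ := by
          ext x; simp only [mem_setOf_eq, mem_empty_iff_false, iff_false, not_lt]
          exact (hGR x).trans (le_of_not_ge htR)
        simp [this]
    calc ∫⁻ t in Ioi 0, μ {x | t < G x}
        = ∫⁻ t in Ioi 0, (Ioc 0 R).indicator (fun t => μ {x | t < G x}) t :=
          setLIntegral_congr_fun measurableSet_Ioi
            hzero
      _ ≤ ∫⁻ t, (Ioc 0 R).indicator (fun t => μ {x | t < G x}) t :=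
          lintegral_mono' Measure.restrict_le_self le_rfl
      _ = ∫⁻ t in Ioc 0 R, μ {x | t < G x} := lintegral_indicator measurableSet_Ioc _
  have hpt : ∀ t, μ {x | t < G x} ≤
      hsDiv ε μ ν + ENNReal.ofReal (Real.exp ε) * ν {x | t < G x} := by
    intro t
    exact hsDiv_le_iff (hGm measurableSet_Ioi) le_rfl
  calc ∫⁻ x, g x ∂μ ≤ ∫⁻ t in Ioc 0 R, μ {x | t < G x} := hlcμ ▸ hμres
    _ ≤ ∫⁻ t in Ioc 0 R, (hsDiv ε μ ν + ENNReal.ofReal (Real.exp ε) * ν {x | t < G x}) :=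
        lintegral_mono fun t => hpt t
    _ = hsDiv ε μ ν * volume (Ioc 0 R)
        + ENNReal.ofReal (Real.exp ε) * ∫⁻ t in Ioc 0 R, ν {x | t < G x} := by
        rw [lintegral_add_left measurable_const, setLIntegral_const,
          lintegral_const_mul' _ _ ENNReal.ofReal_ne_top]
    _ ≤ c * hsDiv ε μ ν + ENNReal.ofReal (Real.exp ε) * ∫⁻ x, g x ∂ν := by
        refine add_le_add ?_ ?_
        · have hvol : volume (Ioc 0 R) ≤ c := by
            rw [Real.volume_Ioc, sub_zero, hR]
            exact ENNReal.ofReal_toReal_le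
          exact (mul_le_mul_right hvol _).trans_eq (mul_comm _ _)
        · refine mul_le_mul_right ?_ _
          rw [hlcν]
          exact lintegral_mono_set Ioc_subset_Ioi_self

/-- if `M` is `(ε,δ)`-DP and `K` is `(γ, ε')`-Dobrushin with
`ε' = log(1 + (e^ε - 1)/δ)`, then `K ∘ M` is `(ε, γδ)`-DP. -/
theorem gen_dobrushin_postprocessing_amplification
    {D X Y : Type*} [MeasurableSpace X] [MeasurableSpace Y]
    (Adj : D → D → Prop)
    (M : D → Measure X) (hMP : ∀ d, IsProbabilityMeasure (M d))
    (K : X → Measure Y) (hKm : Measurable K) (hKP : ∀ x, IsProbabilityMeasure (K x))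
    (ε δ γ : ℝ) (hε : 0 ≤ ε) (hδ : 0 < δ) (hγ0 : 0 ≤ γ) (hγ1 : γ ≤ 1)
    (hDP : ∀ d d', Adj d d' → hsDiv ε (M d) (M d') ≤ ENNReal.ofReal δ)
    (hDob : ∀ x x',
      hsDiv (Real.log (1 + (Real.exp ε - 1) / δ)) (K x) (K x') ≤ ENNReal.ofReal γ) :
    ∀ d d', Adj d d' →
      hsDiv ε ((M d).bind K) ((M d').bind K) ≤ ENNReal.ofReal (γ * δ) := by
  intro d d' hdd
  have hX : Nonempty X := by
    by_contra h
    have h1 := (hMP d).measure_univ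
    rw [Set.univ_eq_empty_iff.mpr (not_nonempty_iff.mp h), measure_empty] at h1
    exact zero_ne_one h1
  have h1ε : (1:ℝ) ≤ Real.exp ε := Real.one_le_exp hε
  have hratio : 0 ≤ (Real.exp ε - 1) / δ := div_nonneg (by linarith) hδ.le
  have hexpε' : Real.exp (Real.log (1 + (Real.exp ε - 1) / δ)) = 1 + (Real.exp ε - 1) / δ :=
    Real.exp_log (by linarith)
  set e' : ℝ≥0∞ := ENNReal.ofReal (Real.exp (Real.log (1 + (Real.exp ε - 1) / δ))) with he'
  set eε : ℝ≥0∞ := ENNReal.ofReal (Real.exp ε) with heε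
  set γ' : ℝ≥0∞ := ENNReal.ofReal γ with hγ'
  set δ' : ℝ≥0∞ := ENNReal.ofReal δ with hδ'
  have he1 : (1:ℝ≥0∞) ≤ e' := ENNReal.one_le_ofReal.mpr (by rw [hexpε']; linarith)
  have heε1 : (1:ℝ≥0∞) ≤ eε := ENNReal.one_le_ofReal.mpr h1ε
  rw [hsDiv]
  refine iSup_le fun E => iSup_le fun hE => ?_
  rw [Measure.bind_apply hE hKm.aemeasurable, Measure.bind_apply hE hKm.aemeasurable]
  set f : X → ℝ≥0∞ := fun x => K x E with hf
  have hfm : Measurable f := (Measure.measurable_coe hE).comp hKm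
  have hf1 : ∀ x, f x ≤ 1 := fun x => by have := hKP x; exact prob_le_one
  set b : ℝ≥0∞ := ⨅ x, f x with hb
  have hbf : ∀ x, b ≤ f x := fun x => iInf_le _ x
  have hb1 : b ≤ 1 := (iInf_le _ (Classical.arbitrary X)).trans (hf1 _)
  have hbne : b ≠ ∞ := (hb1.trans_lt ENNReal.one_lt_top).ne
  have hkey : ∀ x, f x ≤ γ' + e' * b := by
    intro x
    have h3 : f x ≤ ⨅ x', (γ' + e' * f x') :=
      le_iInf fun x' => hsDiv_le_iff hE (hDob x x')
    rwa [← ENNReal.add_iInf,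
      ← ENNReal.mul_iInf (fun h _ => absurd h ENNReal.ofReal_ne_top)] at h3
  set g : X → ℝ≥0∞ := fun x => f x - b with hg
  have hgm : Measurable g := hfm.sub measurable_const
  set c : ℝ≥0∞ := γ' + (e' - 1) * b with hc
  have hble : b ≤ e' * b := by
    calc b = 1 * b := (one_mul b).symm
      _ ≤ e' * b := mul_le_mul_left he1 b
  have hgc : ∀ x, g x ≤ c := by
    intro x
    have hmulb : (e' - 1) * b + b = e' * b := by
      calc (e' - 1) * b + b = ((e' - 1) + 1) * b := by ring
        _ = e' * b := by rw [tsub_add_cancel_of_le he1]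
    calc g x ≤ (γ' + e' * b) - b := tsub_le_tsub_right (hkey x) b
      _ ≤ γ' + (e' - 1) * b := by
          rw [tsub_le_iff_right, add_assoc, hmulb]
  have hcne : c ≠ ∞ :=
    ENNReal.add_ne_top.mpr ⟨ENNReal.ofReal_ne_top,
      ENNReal.mul_ne_top ((tsub_le_self.trans_lt
        (ENNReal.ofReal_lt_top)).ne) hbne⟩
  have hdecomp : ∀ (ρ : Measure X) [IsProbabilityMeasure ρ],
      ∫⁻ x, f x ∂ρ = ∫⁻ x, g x ∂ρ + b := by
    intro ρ hρ
    have hfe : ∀ x, f x = g x + b := fun x => (tsub_add_cancel_of_le (hbf x)).symm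
    calc ∫⁻ x, f x ∂ρ = ∫⁻ x, g x + b ∂ρ := lintegral_congr hfe
      _ = (∫⁻ x, g x ∂ρ) + b * ρ Set.univ := by
          rw [lintegral_add_right _ measurable_const, lintegral_const]
      _ = ∫⁻ x, g x ∂ρ + b := by rw [measure_univ, mul_one]
  have hmain : ∫⁻ x, g x ∂(M d) ≤ c * δ' + eε * ∫⁻ x, g x ∂(M d') := by
    refine le_trans (lintegral_le_of_hsDiv (M d) (M d') g hgm c hcne hgc ε) ?_
    exact add_le_add_left (mul_le_mul_right (hDP d d' hdd) c) _
  have harith : c * δ' + b = ENNReal.ofReal (γ * δ) + eε * b := by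
    have h4 : (e' - 1) * δ' = eε - 1 := by
      rw [he', hδ', ← ENNReal.ofReal_one, ← ENNReal.ofReal_sub _ zero_le_one,
        ← ENNReal.ofReal_mul (by rw [hexpε']; linarith), hexpε']
      rw [add_sub_cancel_left, div_mul_cancel₀ _ hδ.ne', heε,
        ENNReal.ofReal_sub _ zero_le_one, ENNReal.ofReal_one]
    have h5 : γ' * δ' = ENNReal.ofReal (γ * δ) := by
      rw [hγ', hδ', ← ENNReal.ofReal_mul hγ0]
    calc c * δ' + b = γ' * δ' + ((e' - 1) * δ' * b + b) := by ring
      _ = ENNReal.ofReal (γ * δ) + ((eε - 1) * b + b) := by rw [h4, h5]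
      _ = ENNReal.ofReal (γ * δ) + ((eε - 1) + 1) * b := by ring
      _ = ENNReal.ofReal (γ * δ) + eε * b := by rw [tsub_add_cancel_of_le heε1]

  rw [tsub_le_iff_right]
  have hPd := hMP d
  have hPd' := hMP d'
  calc ∫⁻ x, f x ∂(M d) = ∫⁻ x, g x ∂(M d) + b := hdecomp (M d)
    _ ≤ (c * δ' + eε * ∫⁻ x, g x ∂(M d')) + b := add_le_add_left hmain b
    _ = (c * δ' + b) + eε * ∫⁻ x, g x ∂(M d') := by ring
    _ = (ENNReal.ofReal (γ * δ) + eε * b) + eε * ∫⁻ x, g x ∂(M d') := by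
        rw [harith]
    _ = ENNReal.ofReal (γ * δ) + eε * (∫⁻ x, g x ∂(M d') + b) := by ring
    _ = ENNReal.ofReal (γ * δ) + eε * ∫⁻ x, f x ∂(M d') := by rw [hdecomp (M d')]
end

section
/- If M is (ε,δ)-DP and K is a γ-Doeblin Markov operator, then K∘M is (ε', δ')-DP with ε' = log(1 + γ(e^ε - 1)) and δ' = γ(1 - e^{ε'-ε}(1-δ)). -/
open MeasureTheory
open scoped ENNReal

/-- if `M` is `(ε,δ)`-DP and `K` is γ-Doeblin, then `K ∘ M` is
`(ε', δ')`-DP with `ε' = log(1 + γ(e^ε - 1))` and `δ' = γ(1 - e^{ε'-ε}(1-δ))`. -/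
theorem doeblin_postprocessing_amplification
    {D X Y : Type*} [MeasurableSpace X] [MeasurableSpace Y]
    (Adj : D → D → Prop)
    (M : D → Measure X) (hMP : ∀ d, IsProbabilityMeasure (M d))
    (K : X → Measure Y) (hKm : Measurable K) (hKP : ∀ x, IsProbabilityMeasure (K x))
    (ε δ γ : ℝ) (hε : 0 ≤ ε) (hδ : 0 ≤ δ) (hγ0 : 0 ≤ γ) (hγ1 : γ ≤ 1)
    (hDP : ∀ d d', Adj d d' → hsDiv ε (M d) (M d') ≤ ENNReal.ofReal δ)
    (ω : Measure Y) (hω : IsProbabilityMeasure ω)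
    (hDoeblin : ∀ x, (ENNReal.ofReal (1 - γ)) • ω ≤ K x) :
    ∀ d d', Adj d d' →
      hsDiv (Real.log (1 + γ * (Real.exp ε - 1))) ((M d).bind K) ((M d').bind K)
        ≤ ENNReal.ofReal
            (γ * (1 - Real.exp (Real.log (1 + γ * (Real.exp ε - 1)) - ε) * (1 - δ))) := by
  intro d d' hdd
  haveI := hMP d; haveI := hMP d'
  have hexpε : (1:ℝ) ≤ Real.exp ε := Real.one_le_exp hε
  have hbase : (1:ℝ) ≤ 1 + γ * (Real.exp ε - 1) := by nlinarith
  have hexpε' : Real.exp (Real.log (1 + γ * (Real.exp ε - 1))) = 1 + γ * (Real.exp ε - 1) :=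
    Real.exp_log (by linarith)
  set ε' := Real.log (1 + γ * (Real.exp ε - 1)) with hε'def
  have hε'ε : Real.exp ε' ≤ Real.exp ε := by rw [hexpε']; nlinarith
  set θ := Real.exp (ε' - ε) with hθdef
  have hθpos : 0 < θ := Real.exp_pos _
  have hθ1 : θ ≤ 1 := by
    rw [hθdef, Real.exp_sub, div_le_one (Real.exp_pos ε)]; exact hε'ε
  have hθε : θ * Real.exp ε = Real.exp ε' := by
    rw [hθdef, Real.exp_sub]; field_simp
  rw [hsDiv]
  refine iSup₂_le fun E hE => ?_
  -- decompose K x E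
  set g : X → ℝ≥0∞ := fun x => K x E - ENNReal.ofReal (1 - γ) * ω E with hgdef
  have hKdec : ∀ x, K x E = ENNReal.ofReal (1 - γ) * ω E + g x := by
    intro x
    have h := Measure.le_iff'.mp (hDoeblin x) E
    simp only [Measure.smul_apply, smul_eq_mul] at h
    exact (add_tsub_cancel_of_le h).symm
  have hfin : ENNReal.ofReal (1 - γ) * ω Eᶜ ≠ ∞ :=
    ENNReal.mul_ne_top ENNReal.ofReal_ne_top (measure_ne_top ω _)
  have hKle : ∀ x, K x E ≤ ENNReal.ofReal γ + ENNReal.ofReal (1 - γ) * ω E := by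
    intro x
    have h2 := Measure.le_iff'.mp (hDoeblin x) Eᶜ
    simp only [Measure.smul_apply, smul_eq_mul] at h2
    have h3 : K x E + K x Eᶜ = 1 := by
      rw [measure_add_measure_compl hE, measure_univ]
    have h5 : ω E + ω Eᶜ = 1 := by
      rw [measure_add_measure_compl hE, measure_univ]
    have h4 : (ENNReal.ofReal γ + ENNReal.ofReal (1 - γ) * ω E) + ENNReal.ofReal (1 - γ) * ω Eᶜ
        = 1 := by
      have : (ENNReal.ofReal γ + ENNReal.ofReal (1 - γ) * ω E) + ENNReal.ofReal (1 - γ) * ω Eᶜ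
          = ENNReal.ofReal γ + ENNReal.ofReal (1 - γ) * (ω E + ω Eᶜ) := by ring
      rw [this, h5, mul_one, ← ENNReal.ofReal_add hγ0 (by linarith)]
      norm_num
    have h6 : K x E + ENNReal.ofReal (1 - γ) * ω Eᶜ
        ≤ (ENNReal.ofReal γ + ENNReal.ofReal (1 - γ) * ω E) + ENNReal.ofReal (1 - γ) * ω Eᶜ := by
      rw [h4, ← h3]
      exact add_le_add_right h2 _
    exact (ENNReal.add_le_add_iff_right hfin).mp h6
  have hgle : ∀ x, g x ≤ ENNReal.ofReal γ := by
    intro x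
    rw [hgdef]
    refine tsub_le_iff_right.mpr ?_
    exact hKle x
  have hgmeas : Measurable g :=
    ((Measure.measurable_coe hE).comp hKm).sub measurable_const
  set f : X → ℝ := fun x => (g x).toReal with hfdef
  have hfmeas : Measurable f := hgmeas.ennreal_toReal
  have hgtop : ∀ x, g x ≠ ∞ := fun x => ((hgle x).trans_lt ENNReal.ofReal_lt_top).ne
  have hgf : ∀ x, ENNReal.ofReal (f x) = g x := fun x => ENNReal.ofReal_toReal (hgtop x)
  have hfγ : ∀ x, f x ≤ γ := fun x => ENNReal.toReal_le_of_le_ofReal hγ0 (hgle x)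
  have hsetm : ∀ t : ℝ, MeasurableSet {a : X | t < f a} := fun t =>
    measurableSet_lt measurable_const hfmeas
  -- layer cake
  have hlayer : ∀ ρ : Measure X, ∫⁻ x, g x ∂ρ = ∫⁻ t in Set.Ioi (0:ℝ), ρ {a | t < f a} := by
    intro ρ
    rw [← lintegral_congr fun x => hgf x]
    exact lintegral_eq_lintegral_meas_lt ρ (Filter.Eventually.of_forall fun x =>
      ENNReal.toReal_nonneg) hfmeas.aemeasurable
  have htail : ∀ ρ : Measure X, ∫⁻ t in Set.Ioi γ, ρ {a : X | t < f a} = 0 := by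
    intro ρ
    have hz : ∀ᵐ t ∂(volume : Measure ℝ), t ∈ Set.Ioi γ →
        ρ {a : X | t < f a} = (fun _ => (0:ℝ≥0∞)) t := by
      refine Filter.Eventually.of_forall fun t ht => ?_
      have : {a : X | t < f a} = ∅ := by
        ext a
        simp only [Set.mem_setOf_eq, Set.mem_empty_iff_false, iff_false, not_lt]
        exact (hfγ a).trans (le_of_lt ht)
      simp [this]
    rw [setLIntegral_congr_fun_ae measurableSet_Ioi hz, lintegral_zero]
  have hsplit : ∀ ρ : Measure X, ∫⁻ t in Set.Ioi (0:ℝ), ρ {a | t < f a}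
      = ∫⁻ t in Set.Ioc (0:ℝ) γ, ρ {a | t < f a} := by
    intro ρ
    rw [← Set.Ioc_union_Ioi_eq_Ioi hγ0,
      lintegral_union measurableSet_Ioi Set.Ioc_disjoint_Ioi_same, htail ρ, add_zero]
  -- per-set DP bound
  have hDPset : ∀ s : Set X, MeasurableSet s →
      (M d) s ≤ ENNReal.ofReal δ + ENNReal.ofReal (Real.exp ε) * (M d') s := by
    intro s hs
    have h1 : (M d) s - ENNReal.ofReal (Real.exp ε) * (M d') s ≤ ENNReal.ofReal δ := by
      refine le_trans ?_ (hDP d d' hdd)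
      rw [hsDiv]
      exact le_iSup₂ (f := fun (E : Set X) (_ : MeasurableSet E) =>
        (M d) E - ENNReal.ofReal (Real.exp ε) * (M d') E) s hs
    exact tsub_le_iff_right.mp h1
  -- the functional DP bound
  have hABkey : ∫⁻ x, g x ∂(M d)
      ≤ ENNReal.ofReal (Real.exp ε) * ∫⁻ x, g x ∂(M d') + ENNReal.ofReal γ * ENNReal.ofReal δ := by
    rw [hlayer (M d), hlayer (M d'), hsplit (M d)]
    calc ∫⁻ t in Set.Ioc (0:ℝ) γ, (M d) {a | t < f a}
        ≤ ∫⁻ t in Set.Ioc (0:ℝ) γ,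
            (ENNReal.ofReal δ + ENNReal.ofReal (Real.exp ε) * (M d') {a | t < f a}) :=
          lintegral_mono fun t => hDPset _ (hsetm t)
      _ = ENNReal.ofReal δ * volume (Set.Ioc (0:ℝ) γ)
            + ENNReal.ofReal (Real.exp ε) * ∫⁻ t in Set.Ioc (0:ℝ) γ, (M d') {a | t < f a} := by
          rw [lintegral_add_left measurable_const, setLIntegral_const,
            lintegral_const_mul' _ _ ENNReal.ofReal_ne_top]
      _ = (ENNReal.ofReal (Real.exp ε) * ∫⁻ t in Set.Ioc (0:ℝ) γ, (M d') {a | t < f a})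
            + ENNReal.ofReal γ * ENNReal.ofReal δ := by
          rw [Real.volume_Ioc, sub_zero, mul_comm (ENNReal.ofReal δ), add_comm]
      _ ≤ (ENNReal.ofReal (Real.exp ε) * ∫⁻ t in Set.Ioi (0:ℝ), (M d') {a | t < f a})
            + ENNReal.ofReal γ * ENNReal.ofReal δ :=
          add_le_add_left
            (mul_le_mul_right (lintegral_mono_set Set.Ioc_subset_Ioi_self) _) _
  have hAγ : ∫⁻ x, g x ∂(M d) ≤ ENNReal.ofReal γ := by
    calc ∫⁻ x, g x ∂(M d) ≤ ∫⁻ _, ENNReal.ofReal γ ∂(M d) := lintegral_mono hgle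
      _ = ENNReal.ofReal γ := by rw [lintegral_const, measure_univ, mul_one]
  -- key convex combination
  have hkey : ∫⁻ x, g x ∂(M d)
      ≤ ENNReal.ofReal (γ * (1 - θ * (1 - δ)))
        + ENNReal.ofReal (Real.exp ε') * ∫⁻ x, g x ∂(M d') := by
    have hsplitA : ∫⁻ x, g x ∂(M d)
        = ENNReal.ofReal (1 - θ) * ∫⁻ x, g x ∂(M d)
          + ENNReal.ofReal θ * ∫⁻ x, g x ∂(M d) := by
      rw [← add_mul, ← ENNReal.ofReal_add (by linarith) hθpos.le, sub_add_cancel,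
        ENNReal.ofReal_one, one_mul]
    rw [hsplitA]
    calc ENNReal.ofReal (1 - θ) * ∫⁻ x, g x ∂(M d) + ENNReal.ofReal θ * ∫⁻ x, g x ∂(M d)
        ≤ ENNReal.ofReal (1 - θ) * ENNReal.ofReal γ
          + ENNReal.ofReal θ * (ENNReal.ofReal (Real.exp ε) * ∫⁻ x, g x ∂(M d')
            + ENNReal.ofReal γ * ENNReal.ofReal δ) :=
          add_le_add (mul_le_mul_right hAγ _) (mul_le_mul_right hABkey _)
      _ = ENNReal.ofReal ((1 - θ) * γ)
            + (ENNReal.ofReal (Real.exp ε') * ∫⁻ x, g x ∂(M d')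
              + ENNReal.ofReal (θ * (γ * δ))) := by
          rw [← ENNReal.ofReal_mul (by linarith : (0:ℝ) ≤ 1 - θ),
            ← ENNReal.ofReal_mul hγ0, mul_add, ← mul_assoc,
            ← ENNReal.ofReal_mul hθpos.le, hθε, ← ENNReal.ofReal_mul hθpos.le]
      _ = (ENNReal.ofReal ((1 - θ) * γ) + ENNReal.ofReal (θ * (γ * δ)))
            + ENNReal.ofReal (Real.exp ε') * ∫⁻ x, g x ∂(M d') := by ring_nf
      _ = ENNReal.ofReal (γ * (1 - θ * (1 - δ)))
            + ENNReal.ofReal (Real.exp ε') * ∫⁻ x, g x ∂(M d') := by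
          rw [← ENNReal.ofReal_add (mul_nonneg (by linarith) hγ0) (by positivity)]
          congr 1
          ring
  -- bind decomposition
  have hbind : ∀ ρ : Measure X, IsProbabilityMeasure ρ →
      (ρ.bind K) E = ENNReal.ofReal (1 - γ) * ω E + ∫⁻ x, g x ∂ρ := by
    intro ρ hρ
    rw [Measure.bind_apply hE hKm.aemeasurable, lintegral_congr hKdec,
      lintegral_add_left measurable_const, lintegral_const, measure_univ, mul_one]
  rw [hbind (M d) (hMP d), hbind (M d') (hMP d'), tsub_le_iff_right]
  have h1le : (1:ℝ≥0∞) ≤ ENNReal.ofReal (Real.exp ε') := by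
    rw [ENNReal.one_le_ofReal, hexpε']; nlinarith
  calc ENNReal.ofReal (1 - γ) * ω E + ∫⁻ x, g x ∂(M d)
      ≤ ENNReal.ofReal (1 - γ) * ω E
        + (ENNReal.ofReal (γ * (1 - θ * (1 - δ)))
          + ENNReal.ofReal (Real.exp ε') * ∫⁻ x, g x ∂(M d')) := add_le_add_right hkey _
    _ = ENNReal.ofReal (γ * (1 - θ * (1 - δ)))
        + (ENNReal.ofReal (1 - γ) * ω E + ENNReal.ofReal (Real.exp ε') * ∫⁻ x, g x ∂(M d')) := by
        ring
    _ ≤ ENNReal.ofReal (γ * (1 - θ * (1 - δ)))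
        + (ENNReal.ofReal (Real.exp ε') * (ENNReal.ofReal (1 - γ) * ω E)
          + ENNReal.ofReal (Real.exp ε') * ∫⁻ x, g x ∂(M d')) :=
        add_le_add_right (add_le_add_left (le_mul_of_one_le_left' h1le) _) _
    _ = ENNReal.ofReal (γ * (1 - θ * (1 - δ)))
        + ENNReal.ofReal (Real.exp ε')
          * (ENNReal.ofReal (1 - γ) * ω E + ∫⁻ x, g x ∂(M d')) := by
        rw [mul_add]
end

section
/- If M is (ε,δ)-DP and K is a γ-ultra-mixing Markov operator, then K∘M is (ε', δ')-DP with ε' = log(1 + γ(e^ε - 1)) and δ' = γδe^{ε'-ε}. -/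
open MeasureTheory
open scoped ENNReal

open Set in
lemma hs_fun {X : Type*} [MeasurableSpace X] (μ ν : Measure X)
    [IsProbabilityMeasure μ] [IsProbabilityMeasure ν]
    (e δ : ℝ) (hδ : 0 ≤ δ)
    (hDP : ∀ E : Set X, MeasurableSet E →
      μ E ≤ ENNReal.ofReal (Real.exp e) * ν E + ENNReal.ofReal δ)
    (f : X → ℝ) (hf : Measurable f) (m : ℝ) (hm0 : 0 ≤ m) (hm1 : m ≤ 1)
    (hfm : ∀ x, m ≤ f x) (hf1 : ∀ x, f x ≤ 1) :
    ∫⁻ x, ENNReal.ofReal (f x) ∂μ + ENNReal.ofReal (m * Real.exp e)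
      ≤ ENNReal.ofReal (Real.exp e) * ∫⁻ x, ENNReal.ofReal (f x) ∂ν
        + (ENNReal.ofReal ((1 - m) * δ) + ENNReal.ofReal m) := by
  have hf0 : ∀ x, 0 ≤ f x := fun x => le_trans hm0 (hfm x)
  have hμ := lintegral_eq_lintegral_meas_lt μ (ae_of_all _ hf0) hf.aemeasurable
  have hν := lintegral_eq_lintegral_meas_lt ν (ae_of_all _ hf0) hf.aemeasurable
  set J : ℝ≥0∞ := ∫⁻ t in Ioc m 1, ν {a | t < f a} with hJ
  -- upper bound on μ-side
  have hμle : ∫⁻ x, ENNReal.ofReal (f x) ∂μ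
      ≤ ENNReal.ofReal m + (ENNReal.ofReal (Real.exp e) * J + ENNReal.ofReal ((1 - m) * δ)) := by
    rw [hμ, ← Ioc_union_Ioi_eq_Ioi hm0,
      lintegral_union measurableSet_Ioi Ioc_disjoint_Ioi_same,
      ← Ioc_union_Ioi_eq_Ioi hm1,
      lintegral_union measurableSet_Ioi Ioc_disjoint_Ioi_same]
    have h1 : ∫⁻ t in Ioc (0:ℝ) m, μ {a | t < f a} ≤ ENNReal.ofReal m := by
      calc ∫⁻ t in Ioc (0:ℝ) m, μ {a | t < f a} ≤ ∫⁻ _ in Ioc (0:ℝ) m, 1 :=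
            lintegral_mono fun t => prob_le_one
        _ = ENNReal.ofReal m := by
            rw [setLIntegral_const]; simp [Real.volume_Ioc]
    have h2 : ∫⁻ t in Ioi (1:ℝ), μ {a | t < f a} = 0 := by
      have : ∀ t ∈ Ioi (1:ℝ), μ {a | t < f a} = (0:ℝ≥0∞) := by
        intro t ht
        have : {a | t < f a} = ∅ := by
          ext a; simp only [Set.mem_setOf_eq, Set.mem_empty_iff_false, iff_false, not_lt]
          exact le_trans (hf1 a) (le_of_lt ht)
        simp [this]
      calc ∫⁻ t in Ioi (1:ℝ), μ {a | t < f a} = ∫⁻ _ in Ioi (1:ℝ), 0 :=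
            setLIntegral_congr_fun measurableSet_Ioi this
        _ = 0 := by simp
    have h3 : ∫⁻ t in Ioc m 1, μ {a | t < f a}
        ≤ ENNReal.ofReal (Real.exp e) * J + ENNReal.ofReal ((1 - m) * δ) := by
      calc ∫⁻ t in Ioc m 1, μ {a | t < f a}
          ≤ ∫⁻ t in Ioc m 1, (ENNReal.ofReal (Real.exp e) * ν {a | t < f a}
              + ENNReal.ofReal δ) := by
            refine lintegral_mono fun t => ?_
            exact hDP _ (hf measurableSet_Ioi)
        _ = ENNReal.ofReal (Real.exp e) * J + ENNReal.ofReal ((1 - m) * δ) := by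
            rw [lintegral_add_right _ measurable_const,
              lintegral_const_mul' _ _ (by simp), setLIntegral_const]
            congr 1
            rw [Real.volume_Ioc, ← ENNReal.ofReal_mul (by linarith)]
            ring_nf
    have := add_le_add h1 (add_le_add h3 h2.le)
    simpa using this
  -- lower bound on ν-side
  have hνge : ENNReal.ofReal m + J ≤ ∫⁻ x, ENNReal.ofReal (f x) ∂ν := by
    rw [hν]
    have hsub : Ioo 0 m ∪ Ioc m 1 ⊆ Ioi (0:ℝ) := by
      rintro t (⟨h1, _⟩ | ⟨h1, _⟩)
      · exact h1
      · exact lt_of_le_of_lt hm0 h1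
    have hdisj : Disjoint (Ioo (0:ℝ) m) (Ioc m 1) :=
      Set.disjoint_left.mpr fun t ht ht' => absurd ht.2 (not_lt.mpr ht'.1.le)
    have h4 : ∫⁻ t in Ioo (0:ℝ) m, ν {a | t < f a} = ENNReal.ofReal m := by
      have : ∀ t ∈ Ioo (0:ℝ) m, ν {a | t < f a} = (1:ℝ≥0∞) := by
        intro t ht
        have : {a | t < f a} = Set.univ := by
          ext a; simp only [Set.mem_setOf_eq, Set.mem_univ, iff_true]
          exact lt_of_lt_of_le ht.2 (hfm a)
        simp [this]
      calc ∫⁻ t in Ioo (0:ℝ) m, ν {a | t < f a} = ∫⁻ _ in Ioo (0:ℝ) m, 1 :=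
            setLIntegral_congr_fun measurableSet_Ioo this
        _ = ENNReal.ofReal m := by rw [setLIntegral_const]; simp [Real.volume_Ioo]
    calc ENNReal.ofReal m + J
        = ∫⁻ t in Ioo (0:ℝ) m ∪ Ioc m 1, ν {a | t < f a} := by
          rw [lintegral_union measurableSet_Ioc hdisj, h4]
      _ ≤ ∫⁻ t in Ioi (0:ℝ), ν {a | t < f a} := lintegral_mono_set hsub
  -- combine
  have he : ENNReal.ofReal (m * Real.exp e) = ENNReal.ofReal (Real.exp e) * ENNReal.ofReal m := by
    rw [← ENNReal.ofReal_mul (Real.exp_pos e).le]; ring_nf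
  calc ∫⁻ x, ENNReal.ofReal (f x) ∂μ + ENNReal.ofReal (m * Real.exp e)
      ≤ (ENNReal.ofReal m + (ENNReal.ofReal (Real.exp e) * J + ENNReal.ofReal ((1 - m) * δ)))
        + ENNReal.ofReal (Real.exp e) * ENNReal.ofReal m := by rw [← he]; gcongr
    _ = ENNReal.ofReal (Real.exp e) * (ENNReal.ofReal m + J)
        + (ENNReal.ofReal ((1 - m) * δ) + ENNReal.ofReal m) := by ring
    _ ≤ _ := by gcongr

set_option maxHeartbeats 1000000 in
/-- if `M` is `(ε,δ)`-DP and `K` is γ-ultra-mixing, then `K ∘ M` is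
`(ε', δ')`-DP with `ε' = log(1 + γ(e^ε - 1))` and `δ' = γ δ e^{ε'-ε}`. -/
theorem ultra_mixing_postprocessing_amplification
    {D X : Type*} [MeasurableSpace X]
    (Adj : D → D → Prop)
    (M : D → Measure X) (hMP : ∀ d, IsProbabilityMeasure (M d))
    (K : X → Measure X) (hKm : Measurable K) (hKP : ∀ x, IsProbabilityMeasure (K x))
    (ε δ γ : ℝ) (hε : 0 ≤ ε) (hδ : 0 ≤ δ) (hγ0 : 0 ≤ γ) (hγ1 : γ ≤ 1)
    (hDP : ∀ d d', Adj d d' → hsDiv ε (M d) (M d') ≤ ENNReal.ofReal δ)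
    (hUM : ∀ x x', K x ≪ K x' ∧
      ∀ᵐ y ∂(K x'), ENNReal.ofReal (1 - γ) ≤ (K x).rnDeriv (K x') y) :
    ∀ d d', Adj d d' →
      hsDiv (Real.log (1 + γ * (Real.exp ε - 1))) ((M d).bind K) ((M d').bind K)
        ≤ ENNReal.ofReal
            (γ * δ * Real.exp (Real.log (1 + γ * (Real.exp ε - 1)) - ε)) := by
  intro d d' hdd'
  haveI := hMP d; haveI := hMP d'
  -- pointwise ultra-mixing bound
  have hlow : ∀ (x x' : X) (E : Set X), ENNReal.ofReal (1 - γ) * K x' E ≤ K x E := by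
    intro x x' E
    haveI := hKP x; haveI := hKP x'
    obtain ⟨hac, hae⟩ := hUM x x'
    calc ENNReal.ofReal (1 - γ) * K x' E
        = ∫⁻ _ in E, ENNReal.ofReal (1 - γ) ∂(K x') := by rw [setLIntegral_const]
      _ ≤ ∫⁻ y in E, (K x).rnDeriv (K x') y ∂(K x') := lintegral_mono_ae (ae_restrict_of_ae hae)
      _ = K x E := Measure.setLIntegral_rnDeriv hac E
  have hlowI : ∀ (x : X) (E : Set X) (ρ : Measure X), IsProbabilityMeasure ρ →
      ENNReal.ofReal (1 - γ) * ∫⁻ x', K x' E ∂ρ ≤ K x E := by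
    intro x E ρ hρ
    haveI := hρ
    calc ENNReal.ofReal (1 - γ) * ∫⁻ x', K x' E ∂ρ
        = ∫⁻ x', ENNReal.ofReal (1 - γ) * K x' E ∂ρ :=
          (lintegral_const_mul' _ _ ENNReal.ofReal_ne_top).symm
      _ ≤ ∫⁻ _, K x E ∂ρ := lintegral_mono fun x' => hlow x x' E
      _ = K x E := by simp
  rcases hγ0.eq_or_lt with h0 | hγpos
  · -- γ = 0 case
    subst h0
    simp only [hsDiv]
    refine iSup_le fun E => iSup_le fun hE => ?_
    rw [tsub_le_iff_right, Measure.bind_apply hE hKm.aemeasurable,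
      Measure.bind_apply hE hKm.aemeasurable]
    have hKB : ∀ x, K x E ≤ ∫⁻ x', K x' E ∂(M d') := by
      intro x
      haveI := hKP x
      calc K x E = ∫⁻ _, K x E ∂(M d') := by simp
        _ ≤ _ := lintegral_mono fun x' => by simpa using hlow x' x E
    calc ∫⁻ x, K x E ∂(M d) ≤ ∫⁻ _, (∫⁻ x', K x' E ∂(M d')) ∂(M d) := lintegral_mono hKB
      _ = ∫⁻ x', K x' E ∂(M d') := by simp
      _ ≤ _ := by simp [Real.log_one]
  -- main case : γ > 0
  set eε := Real.exp ε with heε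
  have heε1 : 1 ≤ eε := Real.one_le_exp hε
  have heε0 : 0 < eε := Real.exp_pos ε
  have hpos : 0 < 1 + γ * (eε - 1) := by nlinarith
  set ε' := Real.log (1 + γ * (eε - 1)) with hε'def
  have he' : Real.exp ε' = 1 + γ * (eε - 1) := Real.exp_log hpos
  have hβ : Real.exp (ε' - ε) = (1 + γ * (eε - 1)) / eε := by
    rw [Real.exp_sub, he']
  -- additive DP
  have hDP' : ∀ E : Set X, MeasurableSet E →
      M d E ≤ ENNReal.ofReal eε * M d' E + ENNReal.ofReal δ := by
    intro E hE
    have h1 : M d E - ENNReal.ofReal eε * M d' E ≤ ENNReal.ofReal δ := by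
      refine le_trans ?_ (hDP d d' hdd')
      exact le_iSup₂ (f := fun (E : Set X) (_ : MeasurableSet E) =>
        M d E - ENNReal.ofReal eε * M d' E) E hE
    rw [tsub_le_iff_right] at h1
    exact h1.trans_eq (add_comm _ _)
  simp only [hsDiv]
  refine iSup_le fun E => iSup_le fun hE => ?_
  rw [tsub_le_iff_right, Measure.bind_apply hE hKm.aemeasurable,
    Measure.bind_apply hE hKm.aemeasurable]
  have hmeasK : Measurable fun x => K x E := (Measure.measurable_coe hE).comp hKm
  have hmeasKc : Measurable fun x => K x Eᶜ := (Measure.measurable_coe hE.compl).comp hKm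
  have hK1 : ∀ x (F : Set X), K x F ≤ 1 := fun x F => by haveI := hKP x; exact prob_le_one
  have hKtop : ∀ x (F : Set X), K x F ≠ ⊤ := fun x F => ((hK1 x F).trans_lt ENNReal.one_lt_top).ne
  set A := ∫⁻ x, K x E ∂(M d) with hA
  set B := ∫⁻ x, K x E ∂(M d') with hB
  have hI1 : ∀ (ρ : Measure X), IsProbabilityMeasure ρ → (∫⁻ x, K x E ∂ρ) ≤ 1 := by
    intro ρ hρ; haveI := hρ
    calc ∫⁻ x, K x E ∂ρ ≤ ∫⁻ _, 1 ∂ρ := lintegral_mono fun x => hK1 x E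
      _ = 1 := by simp
  have hA1 : A ≤ 1 := hI1 (M d) (hMP d)
  have hB1 : B ≤ 1 := hI1 (M d') (hMP d')
  have hAtop : A ≠ ⊤ := (hA1.trans_lt ENNReal.one_lt_top).ne
  have hBtop : B ≠ ⊤ := (hB1.trans_lt ENNReal.one_lt_top).ne
  set a := A.toReal with ha
  set b := B.toReal with hb
  have ha0 : 0 ≤ a := ENNReal.toReal_nonneg
  have hb0 : 0 ≤ b := ENNReal.toReal_nonneg
  have ha1 : a ≤ 1 := by
    have := ENNReal.toReal_mono (by simp) hA1; simpa using this
  have hb1 : b ≤ 1 := by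
    have := ENNReal.toReal_mono (by simp) hB1; simpa using this
  have hofA : ENNReal.ofReal a = A := ENNReal.ofReal_toReal hAtop
  have hofB : ENNReal.ofReal b = B := ENNReal.ofReal_toReal hBtop
  set q : X → ℝ := fun x => (K x E).toReal with hqdef
  have hq : Measurable q := hmeasK.ennreal_toReal
  have hq0 : ∀ x, 0 ≤ q x := fun x => ENNReal.toReal_nonneg
  have hofq : ∀ x, ENNReal.ofReal (q x) = K x E := fun x => ENNReal.ofReal_toReal (hKtop x E)
  -- lower bounds
  have hlbB : ∀ x, (1 - γ) * b ≤ q x := by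
    intro x
    have h := hlowI x E (M d') (hMP d')
    rw [← hB] at h
    have h2 := ENNReal.toReal_mono (hKtop x E) h
    rwa [ENNReal.toReal_mul, ENNReal.toReal_ofReal (by linarith)] at h2
  have hlbA : ∀ x, (1 - γ) * a ≤ q x := by
    intro x
    have h := hlowI x E (M d) (hMP d)
    rw [← hA] at h
    have h2 := ENNReal.toReal_mono (hKtop x E) h
    rwa [ENNReal.toReal_mul, ENNReal.toReal_ofReal (by linarith)] at h2
  -- upper bound via complement
  have hcompl : ∀ x, q x ≤ γ + (1 - γ) * b := by
    intro x
    have hsum : ∀ x', K x' E + K x' Eᶜ = 1 := fun x' => by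
      haveI := hKP x'
      rw [measure_add_measure_compl hE, measure_univ]
    set Bc := ∫⁻ x', K x' Eᶜ ∂(M d') with hBc
    have hBc1 : Bc ≤ 1 := by
      calc Bc ≤ ∫⁻ _, 1 ∂(M d') := lintegral_mono fun x' => hK1 x' Eᶜ
        _ = 1 := by simp
    have hBctop : Bc ≠ ⊤ := (hBc1.trans_lt ENNReal.one_lt_top).ne
    have hBBc : B + Bc = 1 := by
      rw [hB, hBc, ← lintegral_add_left hmeasK]
      calc ∫⁻ x', (K x' E + K x' Eᶜ) ∂(M d') = ∫⁻ _, 1 ∂(M d') := lintegral_congr hsum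
        _ = 1 := by simp
    have hbbc : b + Bc.toReal = 1 := by
      have := congrArg ENNReal.toReal hBBc
      rwa [ENNReal.toReal_add hBtop hBctop, ENNReal.toReal_one] at this
    have hqqc : q x + (K x Eᶜ).toReal = 1 := by
      have := congrArg ENNReal.toReal (hsum x)
      rwa [ENNReal.toReal_add (hKtop x E) (hKtop x Eᶜ), ENNReal.toReal_one] at this
    have hlbc : (1 - γ) * Bc.toReal ≤ (K x Eᶜ).toReal := by
      have h := hlowI x Eᶜ (M d') (hMP d')
      rw [← hBc] at h
      have h2 := ENNReal.toReal_mono (hKtop x Eᶜ) h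
      rwa [ENNReal.toReal_mul, ENNReal.toReal_ofReal (by linarith)] at h2
    nlinarith [hlbc, hbbc, hqqc]
  have hab : a ≤ γ + (1 - γ) * b := by
    have h1 : A ≤ ENNReal.ofReal (γ + (1 - γ) * b) := by
      rw [hA]
      calc ∫⁻ x, K x E ∂(M d) = ∫⁻ x, ENNReal.ofReal (q x) ∂(M d) := by
            exact lintegral_congr fun x => (hofq x).symm
        _ ≤ ∫⁻ _, ENNReal.ofReal (γ + (1 - γ) * b) ∂(M d) :=
            lintegral_mono fun x => ENNReal.ofReal_le_ofReal (hcompl x)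
        _ = _ := by simp
    have h2 := ENNReal.toReal_mono ENNReal.ofReal_ne_top h1
    rwa [ENNReal.toReal_ofReal (by nlinarith)] at h2
  -- the residual function f and lower bound m
  set f : X → ℝ := fun x => (q x - (1 - γ) * b) / γ with hfdef
  have hfmeas : Measurable f := (hq.sub measurable_const).div_const γ
  have hf1 : ∀ x, f x ≤ 1 := fun x => by
    rw [hfdef]; rw [div_le_one hγpos]; have := hcompl x; linarith
  have hf0 : ∀ x, 0 ≤ f x := fun x => div_nonneg (by linarith [hlbB x]) hγpos.le
  set m : ℝ := max ((1 - γ) * (a - b) / γ) 0 with hmdef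
  have hm0 : 0 ≤ m := le_max_right _ _
  have hm1 : m ≤ 1 := by
    refine max_le ?_ zero_le_one
    rw [div_le_one hγpos]; nlinarith [hab]
  have hfm : ∀ x, m ≤ f x := by
    intro x
    refine max_le ?_ (hf0 x)
    rw [hfdef]
    have h : (1 - γ) * (a - b) ≤ q x - (1 - γ) * b := by nlinarith [hlbA x]
    exact div_le_div_of_nonneg_right h hγpos.le
  -- decomposition of lintegrals
  set Iμ := ∫⁻ x, ENNReal.ofReal (f x) ∂(M d) with hIμ
  set Iν := ∫⁻ x, ENNReal.ofReal (f x) ∂(M d') with hIν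
  have hIbound : ∀ (ρ : Measure X), IsProbabilityMeasure ρ →
      (∫⁻ x, ENNReal.ofReal (f x) ∂ρ) ≤ 1 := by
    intro ρ hρ; haveI := hρ
    calc ∫⁻ x, ENNReal.ofReal (f x) ∂ρ ≤ ∫⁻ _, 1 ∂ρ :=
          lintegral_mono fun x => by
            simpa using ENNReal.ofReal_le_ofReal (hf1 x)
      _ = 1 := by simp
  have hIμtop : Iμ ≠ ⊤ := ((hIbound (M d) (hMP d)).trans_lt ENNReal.one_lt_top).ne
  have hIνtop : Iν ≠ ⊤ := ((hIbound (M d') (hMP d')).trans_lt ENNReal.one_lt_top).ne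
  have hdecomp : ∀ (ρ : Measure X), IsProbabilityMeasure ρ →
      ∫⁻ x, K x E ∂ρ = ENNReal.ofReal γ * (∫⁻ x, ENNReal.ofReal (f x) ∂ρ)
        + ENNReal.ofReal ((1 - γ) * b) := by
    intro ρ hρ; haveI := hρ
    have hpt : ∀ x, K x E
        = ENNReal.ofReal γ * ENNReal.ofReal (f x) + ENNReal.ofReal ((1 - γ) * b) := by
      intro x
      rw [← hofq x, ← ENNReal.ofReal_mul hγpos.le,
        ← ENNReal.ofReal_add (mul_nonneg hγpos.le (hf0 x)) (mul_nonneg (by linarith) hb0)]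
      congr 1
      rw [hfdef]
      field_simp
      ring
    calc ∫⁻ x, K x E ∂ρ
        = ∫⁻ x, (ENNReal.ofReal γ * ENNReal.ofReal (f x) + ENNReal.ofReal ((1 - γ) * b)) ∂ρ :=
          lintegral_congr hpt
      _ = _ := by
          rw [lintegral_add_right _ measurable_const,
            lintegral_const_mul' _ _ ENNReal.ofReal_ne_top, lintegral_const]
          simp
  have haid : a = γ * Iμ.toReal + (1 - γ) * b := by
    have h := hdecomp (M d) (hMP d)
    rw [← hA, ← hIμ] at h
    have h2 := congrArg ENNReal.toReal h
    rwa [ENNReal.toReal_add (ENNReal.mul_ne_top ENNReal.ofReal_ne_top hIμtop)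
        ENNReal.ofReal_ne_top, ENNReal.toReal_mul, ENNReal.toReal_ofReal hγpos.le,
      ENNReal.toReal_ofReal (mul_nonneg (by linarith) hb0)] at h2
  have hbid : b = γ * Iν.toReal + (1 - γ) * b := by
    have h := hdecomp (M d') (hMP d')
    rw [← hB, ← hIν] at h
    have h2 := congrArg ENNReal.toReal h
    rwa [ENNReal.toReal_add (ENNReal.mul_ne_top ENNReal.ofReal_ne_top hIνtop)
        ENNReal.ofReal_ne_top, ENNReal.toReal_mul, ENNReal.toReal_ofReal hγpos.le,
      ENNReal.toReal_ofReal (mul_nonneg (by linarith) hb0)] at h2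
  have hiνb : Iν.toReal = b := mul_left_cancel₀ hγpos.ne' (by linarith)
  -- hockey stick for f
  have hHSE := hs_fun (M d) (M d') ε δ hδ hDP' f hfmeas m hm0 hm1 hfm hf1
  rw [← hIμ, ← hIν, ← heε] at hHSE
  have hRHStop : ENNReal.ofReal eε * Iν + (ENNReal.ofReal ((1 - m) * δ) + ENNReal.ofReal m)
      ≠ ⊤ := by
    refine ENNReal.add_ne_top.mpr ⟨ENNReal.mul_ne_top ENNReal.ofReal_ne_top hIνtop, ?_⟩
    exact ENNReal.add_ne_top.mpr ⟨ENNReal.ofReal_ne_top, ENNReal.ofReal_ne_top⟩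
  have hHS : Iμ.toReal + m * eε ≤ eε * b + ((1 - m) * δ + m) := by
    have h2 := ENNReal.toReal_mono hRHStop hHSE
    rw [ENNReal.toReal_add hIμtop ENNReal.ofReal_ne_top,
      ENNReal.toReal_add (ENNReal.mul_ne_top ENNReal.ofReal_ne_top hIνtop)
        (ENNReal.add_ne_top.mpr ⟨ENNReal.ofReal_ne_top, ENNReal.ofReal_ne_top⟩),
      ENNReal.toReal_add ENNReal.ofReal_ne_top ENNReal.ofReal_ne_top,
      ENNReal.toReal_mul, ENNReal.toReal_ofReal (mul_nonneg hm0 heε0.le),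
      ENNReal.toReal_ofReal heε0.le,
      ENNReal.toReal_ofReal (mul_nonneg (by linarith) hδ),
      ENNReal.toReal_ofReal hm0, hiνb] at h2
    exact h2
  -- final real computation
  rw [← hofA, ← hofB, ← ENNReal.ofReal_mul (Real.exp_pos ε').le,
    ← ENNReal.ofReal_add (by positivity) (mul_nonneg (Real.exp_pos ε').le hb0)]
  refine ENNReal.ofReal_le_ofReal ?_
  rw [hβ, he']
  set iμ := Iμ.toReal with hiμ
  have key : iμ ≤ δ * (1 + γ * (eε - 1)) / eε + eε * b := by
    rcases le_or_gt iμ (eε * b) with hs | hs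
    · have hd : 0 ≤ δ * (1 + γ * (eε - 1)) / eε := by positivity
      linarith
    · set s := iμ - eε * b with hsdef
      have hspos : 0 < s := by rw [hsdef]; linarith
      have hms : (1 - γ) * s ≤ m := by
        refine le_trans ?_ (le_max_left _ _)
        rw [le_div_iff₀ hγpos]
        have habb : a - b = γ * (iμ - b) := by rw [haid]; ring
        have h5 : γ * s ≤ a - b := by
          have hsb : s ≤ iμ - b := by
            have : 0 ≤ (eε - 1) * b := mul_nonneg (by linarith) hb0
            rw [hsdef]; nlinarith
          have := mul_le_mul_of_nonneg_left hsb hγpos.le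
          linarith
        nlinarith [mul_le_mul_of_nonneg_left h5 (show (0:ℝ) ≤ 1 - γ by linarith)]
      have h6 : s ≤ δ - m * (eε - 1) := by nlinarith [mul_nonneg hm0 hδ]
      have h7 : (1 - γ) * s * (eε - 1) ≤ m * (eε - 1) :=
        mul_le_mul_of_nonneg_right hms (by linarith)
      have hkey2 : s * (1 + (1 - γ) * (eε - 1)) ≤ δ := by nlinarith [h6, h7]
      have h8 := mul_le_mul_of_nonneg_right hkey2 (show (0:ℝ) ≤ 1 + γ * (eε - 1) by nlinarith)
      have h9 : s * eε ≤ s * (1 + (1 - γ) * (eε - 1)) * (1 + γ * (eε - 1)) := by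
        nlinarith [mul_nonneg (mul_nonneg hspos.le (mul_nonneg hγpos.le
          (show (0:ℝ) ≤ 1 - γ by linarith))) (sq_nonneg (eε - 1))]
      have h3 : s * eε ≤ δ * (1 + γ * (eε - 1)) := le_trans h9 h8
      have h4 : s ≤ δ * (1 + γ * (eε - 1)) / eε := (le_div_iff₀ heε0).mpr h3
      rw [hsdef] at h4
      linarith
  have hkey3 := mul_le_mul_of_nonneg_left key hγpos.le
  calc a = γ * iμ + (1 - γ) * b := haid
    _ ≤ γ * (δ * (1 + γ * (eε - 1)) / eε + eε * b) + (1 - γ) * b := by linarith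
    _ = γ * δ * ((1 + γ * (eε - 1)) / eε) + (1 + γ * (eε - 1)) * b := by ring
end

section
/- For 0 < L < 1 and integer r ≥ 1, the function φ(L) = (L^{-1/2} - L^{1/2})/(L^{-r/2} - L^{r/2}) is increasing on (0,1) and satisfies lim_{L→1} φ(L) = 1/r; in particular φ(L) ≤ 1/r for all L ∈ (0,1). -/
open Filter

open Real Finset

noncomputable def gfun (r : ℕ) (L : ℝ) : ℝ :=
  ∑ k ∈ Finset.range r, L ^ ((k : ℝ) - ((r : ℝ) - 1) / 2)

-- pairing: y^a + y^(-a) ≤ x^a + x^(-a) for 0 < x ≤ y ≤ 1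
lemma pair_anti {x y : ℝ} (hx : 0 < x) (hxy : x ≤ y) (hy1 : y ≤ 1) (a : ℝ) :
    y ^ a + y ^ (-a) ≤ x ^ a + x ^ (-a) := by
  have hy : 0 < y := lt_of_lt_of_le hx hxy
  wlog ha : 0 ≤ a generalizing a
  · have := this (-a) (by linarith)
    rw [neg_neg] at this; linarith
  have hu : 0 < x ^ a := rpow_pos_of_pos hx a
  have hv : 0 < y ^ a := rpow_pos_of_pos hy a
  have huv : x ^ a ≤ y ^ a := rpow_le_rpow hx.le hxy ha
  have h1 : x ^ a * y ^ a ≤ 1 := by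
    have hxa : x ^ a ≤ 1 := rpow_le_one hx.le (le_trans hxy hy1) ha
    have hya : y ^ a ≤ 1 := rpow_le_one hy.le hy1 ha
    nlinarith
  rw [rpow_neg hx.le, rpow_neg hy.le]
  set u := x ^ a; set v := y ^ a
  have key : (v - u) * (1 - u * v) ≥ 0 := mul_nonneg (by linarith) (by linarith)
  have h2 : u⁻¹ - v⁻¹ = (v - u) / (u * v) := by field_simp
  have h3 : v - u ≤ (v - u) / (u * v) := by
    rw [le_div_iff₀ (mul_pos hu hv)]; nlinarith
  linarith [h2 ▸ h3]

lemma sum_exp_zero (r : ℕ) : ∑ k ∈ Finset.range r, ((k : ℝ) - ((r : ℝ) - 1) / 2) = 0 := by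
  rw [Finset.sum_sub_distrib, Finset.sum_const, Finset.card_range]
  have h : ∑ k ∈ Finset.range r, (k : ℝ) = r * (r - 1) / 2 := by
    induction r with
    | zero => simp
    | succ n ih => rw [Finset.sum_range_succ, ih]; push_cast; ring
  rw [h]; ring

lemma gfun_ge (r : ℕ) {L : ℝ} (hL : 0 < L) : (r : ℝ) ≤ gfun r L := by
  have h : ∀ k ∈ Finset.range r, 1 + Real.log L * ((k : ℝ) - ((r : ℝ) - 1) / 2)
      ≤ L ^ ((k : ℝ) - ((r : ℝ) - 1) / 2) := by
    intro k _
    rw [rpow_def_of_pos hL]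
    have := Real.add_one_le_exp (Real.log L * ((k : ℝ) - ((r : ℝ) - 1) / 2))
    linarith
  calc (r : ℝ) = ∑ k ∈ Finset.range r, (1 + Real.log L * ((k : ℝ) - ((r : ℝ) - 1) / 2)) := by
        rw [Finset.sum_add_distrib, ← Finset.mul_sum, sum_exp_zero, Finset.sum_const,
          Finset.card_range]; simp
    _ ≤ gfun r L := Finset.sum_le_sum h

lemma gfun_pos (r : ℕ) (hr : 1 ≤ r) {L : ℝ} (hL : 0 < L) : 0 < gfun r L :=
  lt_of_lt_of_le (by exact_mod_cast hr : (0:ℝ) < r) (gfun_ge r hL)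

lemma gfun_symm (r : ℕ) {L : ℝ} (hL : 0 < L) :
    gfun r L = ∑ k ∈ Finset.range r, L ^ (-((k : ℝ) - ((r : ℝ) - 1) / 2)) := by
  unfold gfun
  rw [← Finset.sum_range_reflect]
  apply Finset.sum_congr rfl
  intro k hk
  have hk' : k ≤ r - 1 := Nat.le_sub_one_of_lt (Finset.mem_range.mp hk)
  have hr1 : 1 ≤ r := Nat.one_le_iff_ne_zero.mpr (by rintro rfl; simp at hk)
  congr 1
  have : ((r - 1 - k : ℕ) : ℝ) = (r : ℝ) - 1 - k := by
    rw [Nat.cast_sub hk', Nat.cast_sub hr1]; simp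
  rw [this]; ring

lemma gfun_anti (r : ℕ) : AntitoneOn (gfun r) (Set.Ioo 0 1) := by
  intro x hx y hy hxy
  have h2 : gfun r y + gfun r y ≤ gfun r x + gfun r x := by
    nth_rewrite 2 [gfun_symm r hy.1]
    nth_rewrite 2 [gfun_symm r hx.1]
    unfold gfun
    rw [← Finset.sum_add_distrib, ← Finset.sum_add_distrib]
    exact Finset.sum_le_sum fun k _ => pair_anti hx.1 hxy hy.2.le _
  linarith

lemma telescope (r : ℕ) {L : ℝ} (hL : 0 < L) :
    L ^ (-(r : ℝ) / 2) - L ^ ((r : ℝ) / 2)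
      = (L ^ (-(1 : ℝ) / 2) - L ^ ((1 : ℝ) / 2)) * gfun r L := by
  unfold gfun
  rw [Finset.mul_sum]
  have h : ∀ k ∈ Finset.range r,
      (L ^ (-(1 : ℝ) / 2) - L ^ ((1 : ℝ) / 2)) * L ^ ((k : ℝ) - ((r : ℝ) - 1) / 2)
        = L ^ ((k : ℝ) - (r : ℝ) / 2) - L ^ (((k : ℝ) + 1) - (r : ℝ) / 2) := by
    intro k _
    rw [sub_mul, ← rpow_add hL, ← rpow_add hL]
    ring_nf
  rw [Finset.sum_congr rfl h]
  have := Finset.sum_range_sub' (fun k => L ^ ((k : ℝ) - (r : ℝ) / 2)) r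
  simp only [Nat.cast_zero, Nat.cast_succ] at this ⊢
  rw [this, neg_div, show (r:ℝ) - r/2 = r/2 by ring, show (0:ℝ) - r/2 = -(r/2) by ring]

lemma phi_eq (r : ℕ) (hr : 1 ≤ r) {L : ℝ} (hL : L ∈ Set.Ioo (0:ℝ) 1) :
    (L ^ (-(1 : ℝ) / 2) - L ^ ((1 : ℝ) / 2)) / (L ^ (-(r : ℝ) / 2) - L ^ ((r : ℝ) / 2))
      = 1 / gfun r L := by
  have hN : 0 < L ^ (-(1 : ℝ) / 2) - L ^ ((1 : ℝ) / 2) := by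
    have := Real.rpow_lt_rpow_of_exponent_gt hL.1 hL.2 (by norm_num : -(1:ℝ)/2 < (1:ℝ)/2)
    linarith
  rw [telescope r hL.1, div_mul_eq_div_div, div_self hN.ne']

/-- for `0 < L < 1` and integer `r ≥ 1`, the function
`φ(L) = (L^{-1/2} - L^{1/2})/(L^{-r/2} - L^{r/2})` is increasing on `(0,1)`,
tends to `1/r` as `L → 1⁻`, and hence `φ(L) ≤ 1/r` on `(0,1)`. -/
theorem phi_monotone_limit_and_bound (r : ℕ) (hr : 1 ≤ r) :
    MonotoneOn
      (fun L : ℝ => (L ^ (-(1 : ℝ) / 2) - L ^ ((1 : ℝ) / 2)) /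
        (L ^ (-(r : ℝ) / 2) - L ^ ((r : ℝ) / 2))) (Set.Ioo 0 1) ∧
    Tendsto
      (fun L : ℝ => (L ^ (-(1 : ℝ) / 2) - L ^ ((1 : ℝ) / 2)) /
        (L ^ (-(r : ℝ) / 2) - L ^ ((r : ℝ) / 2)))
      (nhdsWithin 1 (Set.Ioo 0 1)) (nhds (1 / r)) ∧
    ∀ L ∈ Set.Ioo (0 : ℝ) 1,
      (L ^ (-(1 : ℝ) / 2) - L ^ ((1 : ℝ) / 2)) /
        (L ^ (-(r : ℝ) / 2) - L ^ ((r : ℝ) / 2)) ≤ 1 / r := by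
  have hr0 : (0 : ℝ) < r := by exact_mod_cast hr
  refine ⟨?_, ?_, ?_⟩
  · intro x hx y hy hxy
    simp only
    rw [phi_eq r hr hx, phi_eq r hr hy]
    exact one_div_le_one_div_of_le (gfun_pos r hr hy.1) (gfun_anti r hx hy hxy)
  · have hg : ContinuousAt (gfun r) 1 := by
      unfold gfun
      exact tendsto_finset_sum (Finset.range r) fun k _ =>
        Real.continuousAt_rpow_const 1 _ (Or.inl one_ne_zero)
    have hg1 : gfun r 1 = r := by simp [gfun]
    have htg : Tendsto (gfun r) (nhdsWithin 1 (Set.Ioo 0 1)) (nhds (r : ℝ)) := by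
      rw [← hg1]; exact hg.continuousWithinAt
    have h1 : Tendsto (fun L => 1 / gfun r L) (nhdsWithin 1 (Set.Ioo 0 1))
        (nhds (1 / r)) := tendsto_const_nhds.div htg hr0.ne'
    refine h1.congr' ?_
    filter_upwards [self_mem_nhdsWithin] with L hL
    exact (phi_eq r hr hL).symm
  · intro L hL
    rw [phi_eq r hr hL]
    exact one_div_le_one_div_of_le hr0 (gfun_ge r hL.1)
end

section
/- Let f : D^n → R^d have L₂-sensitivity Δ with ‖f(D)‖ ≤ R for all D, and consider the Ornstein–Uhlenbeck mechanism M_t(D) = e^{-θt}f(D) + N(0, (ρ²/θ)(1-e^{-2θt})I). If θR² ≤ 4dρ², then its mean squared error E_OU(θ,ρ,t) = (1-e^{-θt})²‖f(D)‖² + (dρ²/θ)(1-e^{-2θt}) satisfies E_OU(θ,ρ,t) ≤ E_GM(θ,ρ,t) = dρ²(e^{2θt}-1)/θ for all t ≥ 0, and the ratio E_OU/E_GM tends to 0 as t → ∞. -/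
open Filter

/-- for the Ornstein–Uhlenbeck mechanism, if `θR² ≤ 4dρ²` then its mean
squared error is at most that of the Gaussian mechanism with the same RDP guarantee,
`E_OU(θ,ρ,t) ≤ E_GM(θ,ρ,t)` for all `t ≥ 0`, and `E_OU/E_GM → 0` as `t → ∞`. -/
theorem ou_mse_le_gaussian_mse
    {D : Type*} (d : ℕ) (hd : 0 < d) (θ ρ R Δ : ℝ)
    (hθ : 0 < θ) (hρ : 0 < ρ) (hR : 0 ≤ R)
    (Adj : D → D → Prop) (f : D → (Fin d → ℝ))
    (hsens : ∀ D₁ D₂, Adj D₁ D₂ → Real.sqrt (∑ i, (f D₁ i - f D₂ i) ^ 2) ≤ Δ)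
    (hbound : ∀ D₁, Real.sqrt (∑ i, (f D₁ i) ^ 2) ≤ R)
    (hcond : θ * R ^ 2 ≤ 4 * d * ρ ^ 2) :
    ∀ D₁ : D,
      (∀ t : ℝ, 0 ≤ t →
        (1 - Real.exp (-θ * t)) ^ 2 * (∑ i, (f D₁ i) ^ 2)
            + (d * ρ ^ 2 / θ) * (1 - Real.exp (-2 * θ * t))
          ≤ d * ρ ^ 2 * (Real.exp (2 * θ * t) - 1) / θ)
      ∧ Tendsto
          (fun t : ℝ =>
            ((1 - Real.exp (-θ * t)) ^ 2 * (∑ i, (f D₁ i) ^ 2)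
                + (d * ρ ^ 2 / θ) * (1 - Real.exp (-2 * θ * t)))
              / (d * ρ ^ 2 * (Real.exp (2 * θ * t) - 1) / θ))
          atTop (nhds 0) := by
  intro D₁
  set F : ℝ := ∑ i, (f D₁ i) ^ 2 with hFdef
  have hF0 : 0 ≤ F := Finset.sum_nonneg fun i _ => sq_nonneg _
  have hFR : F ≤ R ^ 2 := by
    have h := hbound D₁
    have := Real.sq_sqrt hF0
    nlinarith [Real.sqrt_nonneg F]
  have hθF : θ * F ≤ 4 * d * ρ ^ 2 := by
    nlinarith
  constructor
  · intro t ht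
    set x : ℝ := Real.exp (-θ * t) with hxdef
    have hx0 : 0 < x := Real.exp_pos _
    have hx1 : x ≤ 1 := Real.exp_le_one_iff.mpr (by nlinarith)
    have hx2 : Real.exp (-2 * θ * t) = x ^ 2 := by
      rw [sq, hxdef, ← Real.exp_add]; congr 1; ring
    have hx3 : Real.exp (2 * θ * t) = (x ^ 2)⁻¹ := by
      rw [← hx2, ← Real.exp_neg]; congr 1; ring
    rw [hx2, hx3]
    have key : x ^ 2 * θ * ((1 - x) ^ 2 * F) + x ^ 2 * ((d : ℝ) * ρ ^ 2 * (1 - x ^ 2))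
        ≤ (d : ℝ) * ρ ^ 2 * (1 - x ^ 2) := by
      nlinarith [mul_le_mul_of_nonneg_left hθF (by positivity : (0:ℝ) ≤ x ^ 2 * (1 - x) ^ 2),
        mul_nonneg (by positivity : (0:ℝ) ≤ (d : ℝ) * ρ ^ 2)
          (mul_nonneg (mul_nonneg (mul_nonneg (by nlinarith : (0:ℝ) ≤ 1 - x) (by nlinarith : (0:ℝ) ≤ 1 - x)) (by nlinarith : (0:ℝ) ≤ 1 - x)) (by nlinarith : (0:ℝ) ≤ 1 + 3 * x))]
    rw [← sub_nonneg]
    have expand : (d : ℝ) * ρ ^ 2 * ((x ^ 2)⁻¹ - 1) / θ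
          - ((1 - x) ^ 2 * F + (d : ℝ) * ρ ^ 2 / θ * (1 - x ^ 2))
        = ((d : ℝ) * ρ ^ 2 * (1 - x ^ 2)
            - (x ^ 2 * θ * ((1 - x) ^ 2 * F) + x ^ 2 * ((d : ℝ) * ρ ^ 2 * (1 - x ^ 2))))
          / (θ * x ^ 2) := by
      field_simp
    rw [expand]
    exact div_nonneg (by linarith) (by positivity)
  · have hlin1 : Tendsto (fun t : ℝ => -θ * t) atTop atBot :=
      tendsto_id.const_mul_atTop_of_neg (by linarith)
    have hlin2 : Tendsto (fun t : ℝ => -2 * θ * t) atTop atBot := by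
      have : Tendsto (fun t : ℝ => (-2 * θ) * t) atTop atBot :=
        tendsto_id.const_mul_atTop_of_neg (by nlinarith)
      simpa [mul_assoc] using this
    have he1 : Tendsto (fun t : ℝ => Real.exp (-θ * t)) atTop (nhds 0) := by
      exact Real.tendsto_exp_atBot.comp hlin1
    have he2 : Tendsto (fun t : ℝ => Real.exp (-2 * θ * t)) atTop (nhds 0) := by
      exact Real.tendsto_exp_atBot.comp hlin2
    have hnum : Tendsto
        (fun t : ℝ => (1 - Real.exp (-θ * t)) ^ 2 * F
          + (d * ρ ^ 2 / θ) * (1 - Real.exp (-2 * θ * t))) atTop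
        (nhds ((1 - 0) ^ 2 * F + (d * ρ ^ 2 / θ) * (1 - 0))) := by
      exact (((tendsto_const_nhds.sub he1).pow 2).mul tendsto_const_nhds).add
        (tendsto_const_nhds.mul (tendsto_const_nhds.sub he2))
    have hlin3 : Tendsto (fun t : ℝ => 2 * θ * t) atTop atTop := by
      have : Tendsto (fun t : ℝ => (2 * θ) * t) atTop atTop :=
        tendsto_id.const_mul_atTop (by positivity)
      simpa [mul_assoc] using this
    have hexp : Tendsto (fun t : ℝ => Real.exp (2 * θ * t)) atTop atTop := by
      exact Real.tendsto_exp_atTop.comp hlin3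
    have hden : Tendsto (fun t : ℝ => d * ρ ^ 2 * (Real.exp (2 * θ * t) - 1) / θ)
        atTop atTop := by
      apply Tendsto.atTop_div_const hθ
      apply Tendsto.const_mul_atTop (by positivity : (0:ℝ) < d * ρ ^ 2)
      exact tendsto_atTop_add_const_right _ (-1) hexp
    exact hnum.div_atTop hden
end
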